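/- Under the car congestion tax p_i^c(z,x) = aβ·Σ_{ℓ=1}^{m_{z_i}(x)} g(ℓ) (with utilities as in Theorem 1), the car–truck congestion game admits at least one pure strategy Nash equilibrium, i.e., there exists (z*,x*) ∈ R^N × R^M such that no car and no truck can strictly increase its utility by unilaterally changing its time interval. -/

import Mathlib

/-!
The game is an exact potential game. The potential adds to the private terms `ξ` a sum over
intervals of `f(c_r, m_r)`, where `c_r` and `m_r` count the cars and trucks at `r`, and `f` is
chosen so that its increment when one car (resp. truck) joins `r` is that car's (resp. truck's)
congestion utility at `r`, up to the constant `b`. Such an `f` exists because, thanks to the car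
tax `aβ·Σ_{ℓ ≤ m_r} g(ℓ)`, an extra truck changes a car's utility by the same amount,
`a + aβ·g(m_r + 1)`, as an extra car changes a truck's utility. A maximiser of the potential over
the finite set of profiles is then a pure Nash equilibrium.
-/

/-- `n_r(z,x)`: total number of vehicles using interval `r`. -/
def nCount {R : Type*} [DecidableEq R] {N M : ℕ}
    (z : Fin N → R) (x : Fin M → R) (r : R) : ℕ :=
  (Finset.univ.filter fun ℓ => z ℓ = r).card + (Finset.univ.filter fun ℓ => x ℓ = r).card

/-- `m_r(x)`: number of trucks using interval `r`. -/
def mCount {R : Type*} [DecidableEq R] {M : ℕ} (x : Fin M → R) (r : R) : ℕ :=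
  (Finset.univ.filter fun ℓ => x ℓ = r).card

/-- Car utility with the congestion tax `p_i^c(z,x) = aβ·Σ_{ℓ=1}^{m_{z_i}(x)} g(ℓ)`. -/
def carUtax {R : Type*} [DecidableEq R] {N M : ℕ} (a b β : ℝ) (g : ℕ → ℝ)
    (ξc : Fin N → R → ℝ) (i : Fin N) (z : Fin N → R) (x : Fin M → R) : ℝ :=
  ξc i (z i) + (a * (nCount z x (z i) : ℝ) + b)
    + a * β * ∑ ℓ ∈ Finset.Icc 1 (mCount x (z i)), g ℓ

/-- Truck utility. -/
def truckU {R : Type*} [DecidableEq R] {N M : ℕ} (a b β : ℝ) (g : ℕ → ℝ)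
    (ξt : Fin M → R → ℝ) (j : Fin M) (x : Fin M → R) (z : Fin N → R) : ℝ :=
  ξt j (x j) + (a * (nCount z x (x j) : ℝ) + b)
    + β * (a * (nCount z x (x j) : ℝ) + b) * g (mCount x (x j))

open Finset Function

section Update

variable {ι α : Type*} [Fintype ι] [DecidableEq ι]

theorem Finset.sum_apply_update_eq {M : Type*} [AddCommMonoid M] (ξ : ι → α → M)
    (w : ι → α) (i : ι) (c : α) :
    ∑ ℓ, ξ ℓ (update w i c ℓ) = ∑ ℓ ∈ univ.erase i, ξ ℓ (w ℓ) + ξ i c := by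
  rw [← add_sum_erase _ _ (mem_univ i), update_self, add_comm]
  congr 1
  exact sum_congr rfl fun ℓ hℓ => by rw [update_of_ne (ne_of_mem_erase hℓ)]

theorem Finset.card_filter_update_eq [DecidableEq α] (w : ι → α) (i : ι) (c r : α) :
    #{ℓ | update w i c ℓ = r} = #{ℓ ∈ univ.erase i | w ℓ = r} + if c = r then 1 else 0 := by
  simp only [card_filter]
  exact sum_apply_update_eq (fun _ v => if v = r then 1 else 0) w i c

end Update

theorem Finset.sum_add_ite_eq {α G : Type*} [Fintype α] [DecidableEq α] [AddCommGroup G]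
    (F : α → ℕ → G) (n : α → ℕ) (c : α) :
    ∑ r, F r (n r + if c = r then 1 else 0)
      = ∑ r, F r (n r) + (F c (n c + 1) - F c (n c)) := by
  have hterm : ∀ r, F r (n r + if c = r then 1 else 0)
      = F r (n r) + if c = r then F c (n c + 1) - F c (n c) else 0 := by
    intro r
    split_ifs with h
    · subst h; abel
    · simp
  simp only [hterm, sum_add_distrib, sum_ite_eq, mem_univ, if_true]

theorem nCount_eq_add {R : Type*} [DecidableEq R] {N M : ℕ} (z : Fin N → R) (x : Fin M → R)
    (r : R) : nCount z x r = #{i | z i = r} + mCount x r := rfl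

section Potential

variable {R : Type*} [Fintype R] [DecidableEq R] {N M : ℕ}
  (a b β : ℝ) (g : ℕ → ℝ) (ξc : Fin N → R → ℝ) (ξt : Fin M → R → ℝ)

noncomputable def intervalPotential (c m : ℕ) : ℝ :=
  a * ∑ k ∈ Icc 1 (c + m), (k : ℝ) + a * β * c * ∑ ℓ ∈ Icc 1 m, g ℓ
    + β * ∑ k ∈ Icc 1 m, (a * k + b) * g k

theorem intervalPotential_succ_left (c m : ℕ) :
    intervalPotential a b β g (c + 1) m - intervalPotential a b β g c m
      = a * ((c + m + 1 : ℕ) : ℝ) + a * β * ∑ ℓ ∈ Icc 1 m, g ℓ := by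
  unfold intervalPotential
  rw [show c + 1 + m = c + m + 1 by omega, sum_Icc_succ_top (by omega)]
  push_cast
  ring

theorem intervalPotential_succ_right (c m : ℕ) :
    intervalPotential a b β g c (m + 1) - intervalPotential a b β g c m
      = a * ((c + (m + 1) : ℕ) : ℝ) + β * (a * ((c + (m + 1) : ℕ) : ℝ) + b) * g (m + 1) := by
  unfold intervalPotential
  rw [show c + (m + 1) = c + m + 1 by omega, sum_Icc_succ_top (by omega),
    sum_Icc_succ_top (by omega), sum_Icc_succ_top (by omega)]
  push_cast
  ring

noncomputable def potential (z : Fin N → R) (x : Fin M → R) : ℝ :=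
  ∑ i, ξc i (z i) + ∑ j, ξt j (x j)
    + ∑ r, intervalPotential a b β g #{i | z i = r} (mCount x r)

theorem potential_update_car_sub_carUtax (z : Fin N → R) (x : Fin M → R) (i : Fin N) (c : R) :
    potential a b β g ξc ξt (update z i c) x - carUtax a b β g ξc i (update z i c) x
      = ∑ ℓ ∈ univ.erase i, ξc ℓ (z ℓ) + ∑ j, ξt j (x j)
        + ∑ r, intervalPotential a b β g #{ℓ ∈ univ.erase i | z ℓ = r} (mCount x r) - b := by
  unfold potential carUtax
  simp only [sum_apply_update_eq, nCount_eq_add, card_filter_update_eq, update_self, if_true,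
    sum_add_ite_eq (fun r k => intervalPotential a b β g k (mCount x r)),
    intervalPotential_succ_left]
  push_cast
  ring

theorem potential_update_truck_sub_truckU (z : Fin N → R) (x : Fin M → R) (j : Fin M) (c : R) :
    potential a b β g ξc ξt z (update x j c) - truckU a b β g ξt j (update x j c) z
      = ∑ i, ξc i (z i) + ∑ ℓ ∈ univ.erase j, ξt ℓ (x ℓ)
        + ∑ r, intervalPotential a b β g #{i | z i = r} #{ℓ ∈ univ.erase j | x ℓ = r} - b := by
  unfold potential truckU
  simp only [sum_apply_update_eq, nCount_eq_add, mCount, card_filter_update_eq, update_self,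
    if_true, sum_add_ite_eq (fun r k => intervalPotential a b β g #{i | z i = r} k),
    intervalPotential_succ_right]
  push_cast
  ring

theorem potential_update_car (z : Fin N → R) (x : Fin M → R) (i : Fin N) (c : R) :
    potential a b β g ξc ξt (update z i c) x - potential a b β g ξc ξt z x
      = carUtax a b β g ξc i (update z i c) x - carUtax a b β g ξc i z x := by
  have h := potential_update_car_sub_carUtax a b β g ξc ξt z x i (z i)
  rw [update_eq_self] at h
  linarith [potential_update_car_sub_carUtax a b β g ξc ξt z x i c]

theorem potential_update_truck (z : Fin N → R) (x : Fin M → R) (j : Fin M) (c : R) :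
    potential a b β g ξc ξt z (update x j c) - potential a b β g ξc ξt z x
      = truckU a b β g ξt j (update x j c) z - truckU a b β g ξt j x z := by
  have h := potential_update_truck_sub_truckU a b β g ξc ξt z x j (x j)
  rw [update_eq_self] at h
  linarith [potential_update_truck_sub_truckU a b β g ξc ξt z x j c]

end Potential

/-- under the car congestion tax of Theorem 1, the car–truck
congestion game admits at least one pure strategy Nash equilibrium. -/
theorem car_tax_pure_nash_exists {R : Type*} [Fintype R] [DecidableEq R] [Nonempty R]
    {N M : ℕ} (a b β : ℝ) (g : ℕ → ℝ) (ξc : Fin N → R → ℝ) (ξt : Fin M → R → ℝ) :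
    ∃ (z : Fin N → R) (x : Fin M → R),
      (∀ (i : Fin N) (c : R),
        carUtax a b β g ξc i (Function.update z i c) x ≤ carUtax a b β g ξc i z x) ∧
      (∀ (j : Fin M) (c : R),
        truckU a b β g ξt j (Function.update x j c) z ≤ truckU a b β g ξt j x z) := by
  obtain ⟨⟨z, x⟩, hmax⟩ :=
    Finite.exists_max fun p : (Fin N → R) × (Fin M → R) => potential a b β g ξc ξt p.1 p.2
  refine ⟨z, x, fun i c => ?_, fun j c => ?_⟩
  · linarith [hmax (update z i c, x), potential_update_car a b β g ξc ξt z x i c]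
  · linarith [hmax (z, update x j c), potential_update_truck a b β g ξc ξt z x j c]
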